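/- For every N with 6 < N < 39 and every admissible word w of length N−4 over the alphabet {→1,←1,→2,←2}, there exists a minimal conformation of length N whose type sequence equals w (i.e., every admissible word of these lengths is realized without self-intersection). -/

import Mathlib

/-- Points of the cubic lattice `ℤ³`. -/
abbrev P3 : Type := Fin 3 → ℤ

def e1 : P3 := ![1, 0, 0]
def e2 : P3 := ![0, 1, 0]
def e3 : P3 := ![0, 0, 1]

/-- Squared Euclidean norm of an integer vector; it equals `1` iff the
Euclidean norm equals `1`. -/
def sqNorm (v : P3) : ℤ := ∑ k, (v k) ^ 2

/-- A conformation of length `N`: an injective map on `{1, …, N}` whose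
consecutive steps have Euclidean length one. -/
def IsConformation (N : ℕ) (Γ : ℕ → P3) : Prop :=
  Set.InjOn Γ (Set.Icc 1 N) ∧ ∀ i, 1 ≤ i → i < N → sqNorm (Γ (i + 1) - Γ i) = 1

/-- A lattice rotation: an orthogonal integer matrix of determinant one
(equivalently, a linear isometry of `ℝ³` mapping `ℤ³` onto `ℤ³` with
determinant one). -/
def IsLatticeRotation (R : Matrix (Fin 3) (Fin 3) ℤ) : Prop :=
  R.transpose * R = 1 ∧ R.det = 1

/-- Equivalence of length-5 conformations: `Δ' k = R (Δ k) + t` for a lattice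
rotation `R` and translation `t ∈ ℤ³`. -/
def Equiv5 (Δ Δ' : Fin 5 → P3) : Prop :=
  ∃ (R : Matrix (Fin 3) (Fin 3) ℤ) (t : P3),
    IsLatticeRotation R ∧ ∀ k, Δ' k = R.mulVec (Δ k) + t

/-- Reversal of a length-5 conformation (`k ↦ Δ (6 - k)` in 1-based indexing). -/
def rev5 (Δ : Fin 5 → P3) : Fin 5 → P3 := fun k => Δ k.rev

/-- Conformation 1: vertices (0,0,0), (1,0,0), (1,1,0), (0,1,0), (0,1,1). -/
def conf1 : Fin 5 → P3 := ![![0, 0, 0], ![1, 0, 0], ![1, 1, 0], ![0, 1, 0], ![0, 1, 1]]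

/-- Conformation 2: vertices (0,0,0), (0,1,0), (−1,1,0), (−1,1,1), (−1,0,1). -/
def conf2 : Fin 5 → P3 := ![![0, 0, 0], ![0, 1, 0], ![-1, 1, 0], ![-1, 1, 1], ![-1, 0, 1]]

/-- The `i`-th window of `Γ`: the 5-tuple `(Γ(i-2), …, Γ(i+2))`. -/
def window (Γ : ℕ → P3) (i : ℕ) : Fin 5 → P3 := fun k => Γ (i - 2 + (k : ℕ))

/-- `Φ(Δ) = 1`: the 5-tuple `Δ` or its reversal is equivalent to
conformation 1 or to conformation 2. -/
def WindowGood (Δ : Fin 5 → P3) : Prop :=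
  Equiv5 Δ conf1 ∨ Equiv5 (rev5 Δ) conf1 ∨ Equiv5 Δ conf2 ∨ Equiv5 (rev5 Δ) conf2

open Classical in
/-- The function `Φ` on length-5 conformations. -/
noncomputable def Phi (Δ : Fin 5 → P3) : ℤ := if WindowGood Δ then 1 else 0

/-- The energy `E₅(Γ) = −Σ_{i=3}^{N−2} Φ(Γ_i)`. -/
noncomputable def E5 (N : ℕ) (Γ : ℕ → P3) : ℤ :=
  -∑ i ∈ Finset.Icc 3 (N - 2), Phi (window Γ i)

/-- A minimal conformation: a conformation all of whose windows satisfy `Φ = 1`. -/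
def IsMinimal (N : ℕ) (Γ : ℕ → P3) : Prop :=
  IsConformation N Γ ∧ ∀ i, 3 ≤ i → i ≤ N - 2 → WindowGood (window Γ i)

/-- The walk starting at the origin (in 1-based indexing) whose steps
cyclically repeat the given list. -/
def cyclicWalk (steps : List P3) : ℕ → P3
  | 0 => 0
  | 1 => 0
  | n + 2 => cyclicWalk steps (n + 1) + steps.getD (n % steps.length) 0

/-- The 16-term step sequence of the lattice α-helix. -/
def alphaStepList : List P3 :=
  [e1, e2, -e1, e3, -e2, e1, e2, e3, -e1, -e2, e1, e3, e2, -e1, -e2, e3]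

/-- The 4-term step sequence of the lattice β-strand. -/
def betaStepList : List P3 := [e1, e2, -e1, e3]

/-- The lattice α-helix (`H(1) = 0`, steps cyclically repeating `alphaStepList`). -/
def alphaHelix : ℕ → P3 := cyclicWalk alphaStepList

/-- The lattice β-strand (`B(1) = 0`, steps cyclically repeating `betaStepList`). -/
def betaStrand : ℕ → P3 := cyclicWalk betaStepList

/-- The four directed types of windows. -/
inductive DType : Type
  | r1  -- →1
  | l1  -- ←1
  | r2  -- →2
  | l2  -- ←2
deriving DecidableEq

/-- A window `Δ` has directed type `→1` (resp. `→2`) if it is equivalent to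
conformation 1 (resp. 2), and `←1` (resp. `←2`) if its reversal is. -/
def HasType (Δ : Fin 5 → P3) : DType → Prop
  | DType.r1 => Equiv5 Δ conf1
  | DType.l1 => Equiv5 (rev5 Δ) conf1
  | DType.r2 => Equiv5 Δ conf2
  | DType.l2 => Equiv5 (rev5 Δ) conf2

/-- The six allowed ordered pairs of directed types of consecutive windows:
(→1,←1), (←1,→1), (→1,→2), (→2,←2), (←2,←1), (←2,→2). -/
def allowedPairs : List (DType × DType) :=
  [(DType.r1, DType.l1), (DType.l1, DType.r1), (DType.r1, DType.r2),
   (DType.r2, DType.l2), (DType.l2, DType.l1), (DType.l2, DType.r2)]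

/-- `w` is the type sequence of `Γ` (a conformation of length `N`):
`w` has length `N − 4` and its `j`-th letter is the directed type of the
window `Γ_{3+j}`, `j = 0, …, N−5`. -/
def HasTypeSeq (N : ℕ) (Γ : ℕ → P3) (w : List DType) : Prop :=
  w.length = N - 4 ∧ ∀ j (h : j < w.length), HasType (window Γ (3 + j)) (w.get ⟨j, h⟩)

/-- The word `α = →1→2←2←1`. -/
def wordAlpha : List DType := [DType.r1, DType.r2, DType.l2, DType.l1]

/-- The word `β = →1←1`. -/
def wordBeta : List DType := [DType.r1, DType.l1]

/-- `v` is a finite concatenation of copies of the words `α` and `β`. -/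
def IsABConcat (v : List DType) : Prop :=
  ∃ L : List (List DType), (∀ u ∈ L, u = wordAlpha ∨ u = wordBeta) ∧ v = L.flatten

/-- A word is admissible if it is a contiguous subword (factor) of some finite
concatenation of copies of `α` and `β`. -/
def Admissible (w : List DType) : Prop := ∃ v, IsABConcat v ∧ w <:+: v

/-- The two kinds of monomers. -/
inductive AB : Type
  | A
  | B
deriving DecidableEq

/-- The number of occurrences of the letter `c` in the `i`-th 5-tuple
`S(i−2), …, S(i+2)` of the sequence `S`. -/
def countLetter (c : AB) (S : ℕ → AB) (i : ℕ) : ℕ :=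
  ((Finset.Icc (i - 2) (i + 2)).filter fun k => S k = c).card

open Classical in
/-- `Φ₁(Δ) = 1` iff `Δ` or its reversal is equivalent to conformation 1. -/
noncomputable def Phi1 (Δ : Fin 5 → P3) : ℝ :=
  if Equiv5 Δ conf1 ∨ Equiv5 (rev5 Δ) conf1 then 1 else 0

open Classical in
/-- `Φ₂(Δ) = 1` iff `Δ` or its reversal is equivalent to conformation 2. -/
noncomputable def Phi2 (Δ : Fin 5 → P3) : ℝ :=
  if Equiv5 Δ conf2 ∨ Equiv5 (rev5 Δ) conf2 then 1 else 0

/-- The heteropolymer energy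
`E₅′(S,Γ) = −Σᵢ [#_B(Sᵢ)(Φ₁(Γᵢ) + ε Φ₂(Γᵢ)) + #_A(Sᵢ)(Φ₂(Γᵢ) + ε Φ₁(Γᵢ))]`. -/
noncomputable def E5' (ε : ℝ) (S : ℕ → AB) (N : ℕ) (Γ : ℕ → P3) : ℝ :=
  -∑ i ∈ Finset.Icc 3 (N - 2),
    ((countLetter AB.B S i : ℝ) * (Phi1 (window Γ i) + ε * Phi2 (window Γ i)) +
      (countLetter AB.A S i : ℝ) * (Phi2 (window Γ i) + ε * Phi1 (window Γ i)))

/-!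
The type of a window fixes its fourth step from its first two, so an admissible word together
with the first three steps determines the conformation. Every admissible word is read by the
automaton whose states are the positions in `α` and `β`; along such a reading the last three
steps are always a rotated copy of the standard start of the current letter's window, so every
window gets the prescribed type. Self-avoidance is invariant under rotations, so it only has to
be checked from the six standard starts: an exhaustive search over all readable continuations of
at most 34 letters, cut off as soon as the walk is too far from its start to return, does this.
-/

open Matrix

instance : Fintype DType :=
  ⟨⟨↑[DType.r1, .l1, .r2, .l2], by decide⟩, fun t => by cases t <;> decide⟩

inductive Dir | xp | xm | yp | ym | zp | zm
  deriving DecidableEq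

namespace Dir

instance : Fintype Dir := ⟨⟨↑[xp, xm, yp, ym, zp, zm], by decide⟩, fun d => by cases d <;> decide⟩

def neg : Dir → Dir
  | xp => xm | xm => xp | yp => ym | ym => yp | zp => zm | zm => zp

/-- The cross product of two orthogonal directions; junk (the first argument) otherwise. -/
def cross : Dir → Dir → Dir
  | xp, yp => zp | xp, ym => zm | xp, zp => ym | xp, zm => yp
  | xm, yp => zm | xm, ym => zp | xm, zp => yp | xm, zm => ym
  | yp, xp => zm | yp, xm => zp | yp, zp => xp | yp, zm => xm
  | ym, xp => zp | ym, xm => zm | ym, zp => xm | ym, zm => xp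
  | zp, xp => yp | zp, xm => ym | zp, yp => xm | zp, ym => xp
  | zm, xp => ym | zm, xm => yp | zm, yp => xp | zm, ym => xm
  | d, _ => d

def vec : Dir → ℤ × ℤ × ℤ
  | xp => (1, 0, 0) | xm => (-1, 0, 0) | yp => (0, 1, 0)
  | ym => (0, -1, 0) | zp => (0, 0, 1) | zm => (0, 0, -1)

def toP3 (d : Dir) : P3 := ![d.vec.1, d.vec.2.1, d.vec.2.2]

theorem sqNorm_toP3 : ∀ d : Dir, sqNorm d.toP3 = 1 := by decide

def Ortho (a b : Dir) : Prop := b ≠ a ∧ b ≠ a.neg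

instance : DecidableRel Ortho := fun _ _ => inferInstanceAs (Decidable (_ ∧ _))

def rot (a b : Dir) : Dir → Dir
  | xp => a | xm => a.neg | yp => b | ym => b.neg | zp => a.cross b | zm => (a.cross b).neg

theorem rot_xp_yp : ∀ d, rot xp yp d = d := by decide

def frameMatrix (a b : Dir) : Matrix (Fin 3) (Fin 3) ℤ :=
  (Matrix.of ![a.toP3, b.toP3, (a.cross b).toP3])ᵀ

theorem toP3_rot : ∀ a b, Ortho a b → ∀ d, (rot a b d).toP3 = frameMatrix a b *ᵥ d.toP3 := by
  decide +kernel

theorem isLatticeRotation_frameMatrix :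
    ∀ a b, Ortho a b → IsLatticeRotation (frameMatrix a b) := by
  unfold IsLatticeRotation; decide +kernel

end Dir

open Dir

theorem IsLatticeRotation.eq_zero_of_mulVec_eq_zero {M : Matrix (Fin 3) (Fin 3) ℤ}
    (hM : IsLatticeRotation M) {v : P3} (hv : M *ᵥ v = 0) : v = 0 := by
  rw [← one_mulVec v, ← hM.1, ← mulVec_mulVec, hv, mulVec_zero]

theorem Equiv5.affine {Δ c : Fin 5 → P3} (h : Equiv5 Δ c) {M : Matrix (Fin 3) (Fin 3) ℤ}
    (hM : IsLatticeRotation M) (v : P3) : Equiv5 (fun k => M *ᵥ Δ k + v) c := by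
  obtain ⟨R, t, hR, hc⟩ := h
  refine ⟨R * Mᵀ, t - (R * Mᵀ) *ᵥ v, ⟨?_, ?_⟩, fun k => ?_⟩
  · rw [transpose_mul, transpose_transpose, Matrix.mul_assoc, ← Matrix.mul_assoc Rᵀ, hR.1,
      Matrix.one_mul, mul_eq_one_comm.mp hM.1]
  · rw [det_mul, det_transpose, hR.2, hM.2, one_mul]
  · rw [hc k, mulVec_add, mulVec_mulVec, Matrix.mul_assoc, hM.1, Matrix.mul_one]
    abel

theorem HasType.affine {Δ : Fin 5 → P3} {t : DType} (h : HasType Δ t)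
    {M : Matrix (Fin 3) (Fin 3) ℤ} (hM : IsLatticeRotation M) (v : P3) :
    HasType (fun k => M *ᵥ Δ k + v) t := by
  cases t <;> exact Equiv5.affine h hM v

theorem HasType.windowGood {Δ : Fin 5 → P3} {t : DType} (h : HasType Δ t) : WindowGood Δ := by
  cases t
  exacts [Or.inl h, Or.inr (Or.inl h), Or.inr (Or.inr (Or.inl h)), Or.inr (Or.inr (Or.inr h))]

def displacement (l : List Dir) : P3 := (l.map Dir.toP3).sum

@[simp] theorem displacement_nil : displacement [] = 0 := rfl

@[simp] theorem displacement_cons (d : Dir) (l : List Dir) :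
    displacement (d :: l) = d.toP3 + displacement l := by
  simp [displacement]

@[simp] theorem displacement_append (l l' : List Dir) :
    displacement (l ++ l') = displacement l + displacement l' := by
  simp [displacement]

theorem displacement_map_rot {a b : Dir} (hab : Ortho a b) (l : List Dir) :
    displacement (l.map (rot a b)) = frameMatrix a b *ᵥ displacement l := by
  induction l with
  | nil => simp
  | cons d l ih => simp [ih, mulVec_add, toP3_rot a b hab]

theorem displacement_map_rot_ne_zero {a b : Dir} (hab : Ortho a b) {l : List Dir}
    (hl : displacement l ≠ 0) : displacement (l.map (rot a b)) ≠ 0 := fun h =>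
  hl <| (isLatticeRotation_frameMatrix a b hab).eq_zero_of_mulVec_eq_zero <|
    displacement_map_rot hab l ▸ h

def SelfAvoiding (l : List Dir) : Prop :=
  ∀ l', l' <:+: l → l' ≠ [] → displacement l' ≠ 0

theorem selfAvoiding_nil : SelfAvoiding [] := fun _ h hne => (hne (List.eq_nil_of_infix_nil h)).elim

theorem selfAvoiding_cons_iff {d : Dir} {l : List Dir} :
    SelfAvoiding (d :: l) ↔
      (∀ l' ∈ (d :: l).inits, l' ≠ [] → displacement l' ≠ 0) ∧ SelfAvoiding l := by
  simp only [SelfAvoiding, List.infix_cons_iff, List.mem_inits]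
  grind

theorem SelfAvoiding.map_rot {a b : Dir} (hab : Ortho a b) {l : List Dir} (hl : SelfAvoiding l) :
    SelfAvoiding (l.map (rot a b)) := by
  intro l' hl' hne
  obtain ⟨l₀, h₀, rfl⟩ := List.infix_map_iff.mp hl'
  exact displacement_map_rot_ne_zero hab (hl l₀ h₀ (by rintro rfl; exact hne rfl))

/-- The positions in the words `α` and `β`, as states of an automaton reading admissible words. -/
inductive Slot | a0 | a1 | a2 | a3 | b0 | b1
  deriving DecidableEq

namespace Slot

instance : Fintype Slot := ⟨⟨↑[a0, a1, a2, a3, b0, b1], by decide⟩, fun s => by cases s <;> decide⟩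

def letter : Slot → DType
  | a0 => .r1 | a1 => .r2 | a2 => .l2 | a3 => .l1 | b0 => .r1 | b1 => .l1

def next : Slot → List Slot
  | a0 => [a1] | a1 => [a2] | a2 => [a3] | b0 => [b1] | a3 | b1 => [a0, b0]

end Slot

open Slot

def Accepts : Slot → List DType → Prop
  | _, [] => True
  | s, t :: u => s.letter = t ∧ ∃ s' ∈ s.next, Accepts s' u

theorem Accepts.append_left : ∀ {s : Slot} {u v : List DType}, Accepts s (u ++ v) → Accepts s u
  | _, [], _, _ => trivial
  | _, _ :: _, _, ⟨ht, s', hs', h⟩ => ⟨ht, s', hs', h.append_left⟩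

theorem Accepts.append_right : ∀ {s : Slot} {u v : List DType}, Accepts s (u ++ v) →
    ∃ s', Accepts s' v
  | s, [], _, h => ⟨s, h⟩
  | _, _ :: _, _, ⟨_, _, _, h⟩ => h.append_right

theorem accepts_flatten {L : List (List DType)} (hL : ∀ u ∈ L, u = wordAlpha ∨ u = wordBeta) :
    Accepts a0 L.flatten ∨ Accepts b0 L.flatten := by
  induction L with
  | nil => exact Or.inl trivial
  | cons u L ih =>
    have hend : ∃ s ∈ [a0, b0], Accepts s L.flatten := by
      rcases ih fun v hv => hL v (List.mem_cons_of_mem u hv) with h | h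
      exacts [⟨a0, by simp, h⟩, ⟨b0, by simp, h⟩]
    rcases hL u List.mem_cons_self with rfl | rfl
    · exact Or.inl ⟨rfl, a1, by simp [next], rfl, a2, by simp [next], rfl, a3, by simp [next],
        rfl, hend⟩
    · exact Or.inr ⟨rfl, b1, by simp [next], rfl, hend⟩

theorem exists_accepts_of_admissible {w : List DType} (hw : Admissible w) :
    ∃ s, Accepts s w := by
  obtain ⟨_, ⟨L, hL, rfl⟩, pre, suf, hw⟩ := hw
  obtain ⟨s, hs⟩ : ∃ s, Accepts s L.flatten := (accepts_flatten hL).elim (⟨_, ·⟩) (⟨_, ·⟩)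
  rw [← hw, List.append_assoc] at hs
  obtain ⟨s', hs'⟩ := hs.append_right
  exact ⟨s', hs'.append_left⟩

/-- The fourth step of a window of type `t` whose first two steps are `x` and `y`. -/
def nextStep : DType → Dir → Dir → Dir
  | .r1, x, y => x.cross y
  | .l1, _, y => y.neg
  | .r2, x, _ | .l2, x, _ => x.neg

theorem nextStep_rot : ∀ t a b, Ortho a b → ∀ x y,
    nextStep t (rot a b x) (rot a b y) = rot a b (nextStep t x y) := by
  decide +kernel

abbrev Triple := Dir × Dir × Dir

def Triple.toList (c : Triple) : List Dir := [c.1, c.2.1, c.2.2]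

def Triple.rot (a b : Dir) (c : Triple) : Triple :=
  (Dir.rot a b c.1, Dir.rot a b c.2.1, Dir.rot a b c.2.2)

def Triple.shift (t : DType) (c : Triple) : Triple := (c.2.1, c.2.2, nextStep t c.1 c.2.1)

theorem Triple.shift_rot {a b : Dir} (hab : Ortho a b) (t : DType) (c : Triple) :
    (c.rot a b).shift t = (c.shift t).rot a b := by
  simp [Triple.shift, Triple.rot, nextStep_rot t a b hab]

def nextSteps : Triple → List DType → List Dir
  | _, [] => []
  | c, t :: u => (c.shift t).2.2 :: nextSteps (c.shift t) u

def wordSteps (c : Triple) (u : List DType) : List Dir := c.toList ++ nextSteps c u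

theorem wordSteps_cons (c : Triple) (t : DType) (u : List DType) :
    wordSteps c (t :: u) = c.1 :: wordSteps (c.shift t) u := rfl

theorem wordSteps_cons_eq_append (c : Triple) (t : DType) (u : List DType) :
    wordSteps c (t :: u) = wordSteps c [t] ++ nextSteps (c.shift t) u := by
  simp [wordSteps, nextSteps]

theorem length_nextSteps (c : Triple) (u : List DType) :
    (nextSteps c u).length = u.length := by
  induction u generalizing c with
  | nil => rfl
  | cons t u ih => simp [nextSteps, ih]

theorem length_wordSteps (c : Triple) (u : List DType) :
    (wordSteps c u).length = u.length + 3 := by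
  simp [wordSteps, Triple.toList, length_nextSteps]

theorem wordSteps_rot {a b : Dir} (hab : Ortho a b) (c : Triple) (u : List DType) :
    wordSteps (c.rot a b) u = (wordSteps c u).map (rot a b) := by
  induction u generalizing c with
  | nil => rfl
  | cons t u ih => rw [wordSteps_cons, wordSteps_cons, Triple.shift_rot hab, ih]; rfl

/-- The first three steps of the windows `conf1`, `rev5 conf1`, `conf2`, `rev5 conf2`. -/
def standardStart : DType → Triple
  | .r1 => (.xp, .yp, .xm) | .l1 => (.zm, .xp, .ym)
  | .r2 => (.yp, .xm, .zp) | .l2 => (.yp, .zm, .xp)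

def IsRotatedStart (t : DType) (c : Triple) : Prop :=
  ∃ a b, Ortho a b ∧ c = (standardStart t).rot a b

instance (t : DType) : DecidablePred (IsRotatedStart t) :=
  fun _ => inferInstanceAs (Decidable (∃ _, _))

theorem isRotatedStart_standardStart (t : DType) : IsRotatedStart t (standardStart t) :=
  ⟨xp, yp, by decide, by simp [Triple.rot, rot_xp_yp]⟩

theorem isRotatedStart_shift_rot : ∀ s : Slot, ∀ s' ∈ s.next, ∀ a b, Ortho a b →
    IsRotatedStart s'.letter (((standardStart s.letter).rot a b).shift s.letter) := by
  decide +kernel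

theorem IsRotatedStart.shift {s s' : Slot} (hs' : s' ∈ s.next) {c : Triple}
    (hc : IsRotatedStart s.letter c) : IsRotatedStart s'.letter (c.shift s.letter) := by
  obtain ⟨a, b, hab, rfl⟩ := hc
  exact isRotatedStart_shift_rot s s' hs' a b hab

def sumVec (l : List Dir) : ℤ × ℤ × ℤ := (l.map Dir.vec).sum

@[simp] theorem sumVec_cons (d : Dir) (l : List Dir) : sumVec (d :: l) = d.vec + sumVec l := by
  simp [sumVec]

theorem displacement_eq_sumVec (l : List Dir) :
    displacement l = ![(sumVec l).1, (sumVec l).2.1, (sumVec l).2.2] := by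
  induction l with
  | nil => ext i; fin_cases i <;> rfl
  | cons d l ih => ext i; fin_cases i <;> simp [ih, Dir.toP3]

theorem displacement_ne_zero_of_sumVec {l : List Dir} (hl : sumVec l ≠ 0) :
    displacement l ≠ 0 := by
  intro h
  rw [displacement_eq_sumVec] at h
  exact hl (Prod.ext (congrFun h 0) (Prod.ext (congrFun h 1) (congrFun h 2)))

def l1Norm (v : ℤ × ℤ × ℤ) : ℕ := v.1.natAbs + v.2.1.natAbs + v.2.2.natAbs

theorem l1Norm_sumVec_le (l : List Dir) : l1Norm (sumVec l) ≤ l.length := by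
  induction l with
  | nil => rfl
  | cons d l ih =>
    have h1 := Int.natAbs_add_le d.vec.1 (sumVec l).1
    have h2 := Int.natAbs_add_le d.vec.2.1 (sumVec l).2.1
    have h3 := Int.natAbs_add_le d.vec.2.2 (sumVec l).2.2
    have hd : l1Norm d.vec = 1 := by cases d <;> rfl
    simp only [l1Norm, sumVec_cons, Prod.fst_add, Prod.snd_add, List.length_cons] at *
    omega

theorem add_sumVec_ne_zero_of_length_lt {q : ℤ × ℤ × ℤ} {l : List Dir}
    (hl : l.length < l1Norm q) : q + sumVec l ≠ 0 := by
  intro h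
  have := l1Norm_sumVec_le l
  rw [eq_neg_of_add_eq_zero_left h] at hl
  simp only [l1Norm, Prod.fst_neg, Prod.snd_neg, Int.natAbs_neg] at hl this
  omega

/-- Whether every continuation of at most `n` letters, read from slot `s`, of a walk now at `p`
whose last three steps are `c`, avoids the origin. A branch is cut once it is farther from the
origin than the letters left. -/
def avoidsOrigin : ℕ → Slot → Triple → ℤ × ℤ × ℤ → Bool
  | 0, _, _, _ => true
  | n + 1, s, c, p =>
    let q := p + (c.shift s.letter).2.2.vec
    q != 0 &&
      (decide (n < l1Norm q) || s.next.all fun s' => avoidsOrigin n s' (c.shift s.letter) q)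

theorem add_sumVec_ne_zero_of_avoidsOrigin : ∀ {n : ℕ} {s : Slot} {c : Triple} {p : ℤ × ℤ × ℤ}
    {u : List DType} {l : List Dir}, avoidsOrigin n s c p = true → Accepts s u → u.length ≤ n →
    l <+: nextSteps c u → l ≠ [] → p + sumVec l ≠ 0
  | _, _, _, _, [], _, _, _, _, hl, hne => (hne (List.eq_nil_of_prefix_nil hl)).elim
  | 0, _, _, _, _ :: _, _, _, _, hlen, _, _ => by simp at hlen
  | n + 1, s, c, p, t :: u, l, hcheck, ⟨ht, s', hs', hu⟩, hlen, hl, hne => by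
    subst ht
    simp only [avoidsOrigin, Bool.and_eq_true, bne_iff_ne, Bool.or_eq_true, decide_eq_true_eq,
      List.all_eq_true] at hcheck
    obtain ⟨hq, hrest⟩ := hcheck
    obtain rfl | ⟨l', rfl, hl'⟩ := List.prefix_cons_iff.mp hl
    · exact (hne rfl).elim
    rw [sumVec_cons, ← add_assoc]
    rcases eq_or_ne l' [] with rfl | hl'ne
    · simpa [sumVec] using hq
    rcases hrest with hfar | hcheck
    · refine add_sumVec_ne_zero_of_length_lt (lt_of_le_of_lt ?_ hfar)
      have := hl'.length_le
      rw [length_nextSteps] at this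
      simp at hlen; omega
    · exact add_sumVec_ne_zero_of_avoidsOrigin (hcheck s' hs') hu (by simpa using hlen) hl' hl'ne

theorem selfAvoiding_standardStart (t : DType) : SelfAvoiding (standardStart t).toList := by
  cases t <;> simp only [standardStart, Triple.toList, selfAvoiding_cons_iff] <;>
    exact ⟨by decide, by decide, by decide, selfAvoiding_nil⟩

theorem IsRotatedStart.selfAvoiding {t : DType} {c : Triple} (hc : IsRotatedStart t c) :
    SelfAvoiding c.toList := by
  obtain ⟨a, b, hab, rfl⟩ := hc
  exact (selfAvoiding_standardStart t).map_rot hab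

theorem avoidsOrigin_standardStart : ∀ s : Slot,
    avoidsOrigin 34 s (standardStart s.letter) (sumVec (standardStart s.letter).toList) = true := by
  decide +kernel

theorem displacement_prefix_wordSteps_ne_zero {s : Slot} {c : Triple} {u : List DType}
    (hs : Accepts s u) (hc : IsRotatedStart s.letter c) (hu : u.length ≤ 34) {l : List Dir}
    (hl : l <+: wordSteps c u) (hne : l ≠ []) : displacement l ≠ 0 := by
  obtain ⟨a, b, hab, rfl⟩ := hc
  rw [wordSteps_rot hab] at hl
  obtain ⟨l₀, h₀, rfl⟩ := List.prefix_map_iff.mp hl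
  refine displacement_map_rot_ne_zero hab ?_
  rcases List.prefix_or_prefix_of_prefix h₀ (List.prefix_append _ (nextSteps _ u))
    with hshort | ⟨l', rfl⟩
  · exact selfAvoiding_standardStart _ l₀ hshort.isInfix (by rintro rfl; exact hne rfl)
  rcases eq_or_ne l' [] with rfl | hl'
  · exact selfAvoiding_standardStart _ _ (List.infix_refl _) (by simpa using hne)
  refine displacement_ne_zero_of_sumVec ?_
  rw [sumVec, List.map_append, List.sum_append]
  exact add_sumVec_ne_zero_of_avoidsOrigin (avoidsOrigin_standardStart s) hs hu
    ((List.prefix_append_right_inj _).mp h₀) hl'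

theorem selfAvoiding_wordSteps {s : Slot} {c : Triple} {u : List DType} (hs : Accepts s u)
    (hc : IsRotatedStart s.letter c) (hu : u.length ≤ 34) : SelfAvoiding (wordSteps c u) := by
  induction u generalizing s c with
  | nil => exact hc.selfAvoiding
  | cons t u ih =>
    obtain ⟨rfl, s', hs', hu'⟩ := id hs
    rw [wordSteps_cons, selfAvoiding_cons_iff, ← wordSteps_cons]
    refine ⟨fun l hl => displacement_prefix_wordSteps_ne_zero hs hc hu
      ((List.mem_inits _ _).mp hl), ih hu' (hc.shift hs') (by simp at hu; omega)⟩

theorem exists_drop_wordSteps {s : Slot} {c : Triple} {u : List DType} (hs : Accepts s u)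
    (hc : IsRotatedStart s.letter c) {j : ℕ} (hj : j ≤ u.length) :
    ∃ s' c', Accepts s' (u.drop j) ∧ IsRotatedStart s'.letter c' ∧
      (wordSteps c u).drop j = wordSteps c' (u.drop j) := by
  induction j generalizing s c u with
  | zero => exact ⟨s, c, hs, hc, rfl⟩
  | succ j ih =>
    obtain _ | ⟨t, u⟩ := u
    · simp at hj
    obtain ⟨rfl, s', hs', hu⟩ := hs
    simpa [wordSteps_cons] using ih hu (hc.shift hs') (by simpa using hj)

def standardWindow (t : DType) (k : Fin 5) : P3 :=
  displacement ((wordSteps (standardStart t) [t]).take k)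

theorem isLatticeRotation_one : IsLatticeRotation 1 := ⟨by simp, by simp⟩

theorem hasType_standardWindow : ∀ t, HasType (standardWindow t) t
  | .r1 => ⟨1, 0, isLatticeRotation_one, by decide⟩
  | .l1 => ⟨1, ![0, 1, 1], isLatticeRotation_one, by decide⟩
  | .r2 => ⟨1, 0, isLatticeRotation_one, by decide⟩
  | .l2 => ⟨1, ![-1, 0, 1], isLatticeRotation_one, by decide⟩

/-- Indexed from 1, as in `IsConformation`: `walk S (m + 1)` is the point after `m` steps. -/
def walk (S : List Dir) (m : ℕ) : P3 := displacement (S.take (m - 1))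

theorem walk_add (S : List Dir) (i g : ℕ) :
    walk S (i + 1 + g) = walk S (i + 1) + displacement ((S.drop i).take g) := by
  simp [walk, Nat.add_right_comm i 1 g, List.take_add]

theorem hasType_window {s : Slot} {c : Triple} {w : List DType} (hs : Accepts s w)
    (hc : IsRotatedStart s.letter c) {j : ℕ} (hj : j < w.length) :
    HasType (window (walk (wordSteps c w)) (3 + j)) w[j] := by
  obtain ⟨s', c', hs', hc', hdrop⟩ := exists_drop_wordSteps hs hc hj.le
  rw [List.drop_eq_getElem_cons hj] at hs' hdrop
  obtain ⟨a, b, hab, rfl⟩ := hs'.1 ▸ hc'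
  have hwin : window (walk (wordSteps c w)) (3 + j) =
      fun k => frameMatrix a b *ᵥ standardWindow w[j] k + walk (wordSteps c w) (j + 1) := by
    funext k
    have hk : (k : ℕ) ≤ (wordSteps (standardStart w[j]) [w[j]]).length := by
      rw [length_wordSteps, List.length_singleton]; omega
    rw [window, show 3 + j - 2 + (k : ℕ) = j + 1 + k by omega, walk_add, hdrop, add_comm,
      wordSteps_cons_eq_append, wordSteps_rot hab, List.take_append_of_le_length (by simpa),
      ← List.map_take, displacement_map_rot hab, standardWindow]
  rw [hwin]
  exact (hasType_standardWindow w[j]).affine (isLatticeRotation_frameMatrix a b hab) _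

theorem isConformation_walk {S : List Dir} (hS : SelfAvoiding S) {N : ℕ}
    (hN : N ≤ S.length + 1) : IsConformation N (walk S) := by
  refine ⟨fun p hp q hq hpq => ?_, fun i hi hiN => ?_⟩
  · by_contra hne
    wlog hlt : p < q generalizing p q
    · exact this q hq p hp hpq.symm (Ne.symm hne) (by omega)
    obtain ⟨i, rfl⟩ : ∃ i, p = i + 1 := ⟨p - 1, by grind⟩
    obtain ⟨g, rfl⟩ : ∃ g, q = i + 1 + g := ⟨q - (i + 1), by omega⟩
    rw [walk_add, left_eq_add] at hpq
    refine hS _ ((List.take_prefix _ _).isInfix.trans (List.drop_suffix _ _).isInfix) ?_ hpq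
    simp only [ne_eq, List.take_eq_nil_iff, List.drop_eq_nil_iff]
    grind
  · obtain ⟨i, rfl⟩ : ∃ i', i = i' + 1 := ⟨i - 1, by omega⟩
    have := walk_add S i 1
    rw [List.take_one, List.head?_drop, List.getElem?_eq_getElem (by omega)] at this
    simp [this, Dir.sqNorm_toP3]

theorem admissible_word_realized_general (N : ℕ) (h2 : N < 39)
    (w : List DType) (hw : Admissible w) (hlen : w.length = N - 4) :
    ∃ Γ : ℕ → P3, IsMinimal N Γ ∧ HasTypeSeq N Γ w := by
  obtain ⟨s, hs⟩ := exists_accepts_of_admissible hw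
  have hc := isRotatedStart_standardStart s.letter
  have hS := selfAvoiding_wordSteps hs hc (by omega)
  refine ⟨walk (wordSteps (standardStart s.letter) w),
    ⟨isConformation_walk hS (by rw [length_wordSteps]; omega), fun i hi hiN => ?_⟩,
    hlen, fun j hj => hasType_window hs hc hj⟩
  obtain ⟨j, rfl⟩ : ∃ j, i = 3 + j := ⟨i - 3, by omega⟩
  exact (hasType_window hs hc (by omega)).windowGood

/-- for every `6 < N < 39`, every admissible word of length
`N − 4` is the type sequence of some minimal conformation of length `N`
(i.e. is realized without self-intersection). -/
theorem admissible_word_realized (N : ℕ) (h1 : 6 < N) (h2 : N < 39)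
    (w : List DType) (hw : Admissible w) (hlen : w.length = N - 4) :
    ∃ Γ : ℕ → P3, IsMinimal N Γ ∧ HasTypeSeq N Γ w :=
  admissible_word_realized_general N h2 w hw hlen
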